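/- arXiv:1702.01056 — 4 statements merged into one kernel-verified Lean document; each statement's English description precedes it below -/
import Mathlib

section
/- (Proposition 4, part 1.) Let ε ∈ [0, 1], t* ∈ ℝ, let S be a finite nonempty set, and let d : S → ℝ≥0 and t : S → ℝ satisfy (1 − ε)·d(s) ≤ t(s) − t* ≤ (1 + ε)·d(s) for every s ∈ S. If s₀ ∈ S satisfies t(s₀) = min_{s∈S} t(s) (s₀ is a first-infected sensor), then d(s₀) − min_{s∈S} d(s) ≤ ε·(d(s₀) + min_{s∈S} d(s)). -/
theorem stmt_10_general {α : Type*} (ε : ℝ) (tstar : ℝ)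
    (S : Finset α) (hS : S.Nonempty) (d t : α → ℝ)
    (ht : ∀ s ∈ S, (1 - ε) * d s ≤ t s - tstar ∧ t s - tstar ≤ (1 + ε) * d s)
    (s₀ : α) (hs₀ : s₀ ∈ S) (hfirst : t s₀ = S.inf' hS t) :
    d s₀ - S.inf' hS d ≤ ε * (d s₀ + S.inf' hS d) := by
  obtain ⟨s₁, hs₁, hmin⟩ := S.exists_mem_eq_inf' hS d
  have hdelay : (1 - ε) * d s₀ ≤ (1 + ε) * d s₁ :=
    calc (1 - ε) * d s₀ ≤ t s₀ - tstar := (ht s₀ hs₀).1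
      _ ≤ t s₁ - tstar := by gcongr; exact hfirst ▸ S.inf'_le t hs₁
      _ ≤ (1 + ε) * d s₁ := (ht s₁ hs₁).2
  rw [hmin]
  linarith

theorem stmt_10 {α : Type*} (ε : ℝ) (hε : ε ∈ Set.Icc (0 : ℝ) 1) (tstar : ℝ)
    (S : Finset α) (hS : S.Nonempty) (d t : α → ℝ)
    (hd : ∀ s ∈ S, 0 ≤ d s)
    (ht : ∀ s ∈ S, (1 - ε) * d s ≤ t s - tstar ∧ t s - tstar ≤ (1 + ε) * d s)
    (s₀ : α) (hs₀ : s₀ ∈ S) (hfirst : t s₀ = S.inf' hS t) :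
    d s₀ - S.inf' hS d ≤ ε * (d s₀ + S.inf' hS d) :=
  stmt_10_general ε tstar S hS d t ht s₀ hs₀ hfirst
end

section
/- (Theorem 2, complete-observation form.) Let (V, d) be a finite metric space, ε ∈ [0, 1], v* ∈ V, t* ∈ ℝ, and let t : V → ℝ satisfy (1 − ε)·d(v*, u) ≤ t(u) − t* ≤ (1 + ε)·d(v*, u) for every u ∈ V, and t(v) > t(v*) for every v ≠ v*. Then the set of nodes v ∈ V such that |d(u₂, v) − d(u₁, v) − t(u₂) + t(u₁)| ≤ ε·(d(u₁, v) + d(u₂, v)) holds for all u₁, u₂ ∈ V is exactly {v*}. -/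
/-! Writing `a u := t u - t*`, the infection bounds say `|d(v*, u) - a u| ≤ ε d(v*, u)`, and the
difference of two such errors is exactly the quantity tested by the pairwise condition at `v*`.
Conversely, testing a candidate `v` against the pair `(v, u)` gives
`t v - t u ≤ (ε - 1) d(u, v) ≤ 0`, so a candidate is infected no later than any node; since
`v*` is infected strictly first, no other node survives. -/

def IsCandidateSource {V : Type*} [PseudoMetricSpace V] (ε : ℝ) (t : V → ℝ) (v : V) : Prop :=
  ∀ u₁ u₂ : V, |dist u₂ v - dist u₁ v - t u₂ + t u₁| ≤ ε * (dist u₁ v + dist u₂ v)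

section

variable {V : Type*} [PseudoMetricSpace V] {ε : ℝ} {t : V → ℝ}

theorem isCandidateSource_of_bounds {vstar : V} {tstar : ℝ}
    (ht : ∀ u : V, (1 - ε) * dist vstar u ≤ t u - tstar ∧
      t u - tstar ≤ (1 + ε) * dist vstar u) :
    IsCandidateSource ε t vstar := by
  have herr : ∀ u, |dist u vstar - (t u - tstar)| ≤ ε * dist u vstar := fun u => by
    obtain ⟨hlow, hupp⟩ := ht u
    rw [dist_comm, abs_le]
    constructor <;> linarith
  intro u₁ u₂
  calc |dist u₂ vstar - dist u₁ vstar - t u₂ + t u₁|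
      = |(dist u₂ vstar - (t u₂ - tstar)) - (dist u₁ vstar - (t u₁ - tstar))| := by ring_nf
    _ ≤ |dist u₂ vstar - (t u₂ - tstar)| + |dist u₁ vstar - (t u₁ - tstar)| := abs_sub _ _
    _ ≤ ε * dist u₂ vstar + ε * dist u₁ vstar := add_le_add (herr u₂) (herr u₁)
    _ = ε * (dist u₁ vstar + dist u₂ vstar) := by ring

theorem IsCandidateSource.le_time {v : V} (hv : IsCandidateSource ε t v) (hε : ε ≤ 1) (u : V) :
    t v ≤ t u := by
  have hpair := (abs_le.1 (hv v u)).2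
  rw [dist_self] at hpair
  linarith [mul_nonneg (sub_nonneg.2 hε) (dist_nonneg (x := u) (y := v))]

end

theorem stmt_15_general {V : Type*} [MetricSpace V]
    (ε : ℝ) (hε : ε ∈ Set.Icc (0 : ℝ) 1) (vstar : V) (tstar : ℝ)
    (t : V → ℝ)
    (ht : ∀ u : V, (1 - ε) * dist vstar u ≤ t u - tstar ∧
      t u - tstar ≤ (1 + ε) * dist vstar u)
    (hfirst : ∀ v : V, v ≠ vstar → t v > t vstar) :
    {v : V | ∀ u₁ u₂ : V,
        |dist u₂ v - dist u₁ v - t u₂ + t u₁| ≤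
          ε * (dist u₁ v + dist u₂ v)} = {vstar} := by
  refine Set.eq_singleton_iff_unique_mem.2 ⟨isCandidateSource_of_bounds ht, fun v hv => ?_⟩
  by_contra hne
  exact (hfirst v hne).not_ge (IsCandidateSource.le_time hv hε.2 vstar)

theorem stmt_15 {V : Type*} [MetricSpace V] [Fintype V]
    (ε : ℝ) (hε : ε ∈ Set.Icc (0 : ℝ) 1) (vstar : V) (tstar : ℝ)
    (t : V → ℝ)
    (ht : ∀ u : V, (1 - ε) * dist vstar u ≤ t u - tstar ∧
      t u - tstar ≤ (1 + ε) * dist vstar u)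
    (hfirst : ∀ v : V, v ≠ vstar → t v > t vstar) :
    {v : V | ∀ u₁ u₂ : V,
        |dist u₂ v - dist u₁ v - t u₂ + t u₁| ≤
          ε * (dist u₁ v + dist u₂ v)} = {vstar} :=
  stmt_15_general ε hε vstar tstar t ht hfirst
end

section
/- (Proposition 5, lower bound.) Let (V, d) be a metric space, ε ∈ [0, 1], t* ∈ ℝ, let B ⊆ V be a finite set containing the source v*, let c ∈ V, and let Ω be a finite nonempty set of observations (u_ω, t_ω) ∈ V × ℝ with t_ω − t* ≤ (1 + ε)·d(u_ω, v*) for every ω ∈ Ω. If the infection time t_c of c satisfies t_c − t* ≥ (1 − ε)·d(c, v*), then t_c ≥ min_{v ∈ B} max_{ω ∈ Ω} { d(c, v) − d(u_ω, v) + t_ω − ε·(d(c, v) + d(u_ω, v)) }. -/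
theorem stmt_16_general {V : Type*} [MetricSpace V] (ε : ℝ)
    (tstar : ℝ)
    (B : Finset V) (vstar : V) (hvstar : vstar ∈ B) (c : V)
    (Obs : Finset (V × ℝ)) (hObs : Obs.Nonempty)
    (hub : ∀ ω ∈ Obs, ω.2 - tstar ≤ (1 + ε) * dist ω.1 vstar)
    (tc : ℝ) (htc : tc - tstar ≥ (1 - ε) * dist c vstar) :
    tc ≥ B.inf' ⟨vstar, hvstar⟩ (fun v =>
      Obs.sup' hObs (fun ω =>
        dist c v - dist ω.1 v + ω.2 - ε * (dist c v + dist ω.1 v))) := by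
  -- At the true source each term is `(1 - ε) d(c, v*) - (1 + ε) d(u, v*) + t_ω`, and the two
  -- infection-time windows bound it by `tc`.
  refine (B.inf'_le _ hvstar).trans (Finset.sup'_le _ _ fun ω hω => ?_)
  linarith [hub ω hω]

theorem stmt_16 {V : Type*} [MetricSpace V] (ε : ℝ)
    (hε : ε ∈ Set.Icc (0 : ℝ) 1) (tstar : ℝ)
    (B : Finset V) (vstar : V) (hvstar : vstar ∈ B) (c : V)
    (Obs : Finset (V × ℝ)) (hObs : Obs.Nonempty)
    (hub : ∀ ω ∈ Obs, ω.2 - tstar ≤ (1 + ε) * dist ω.1 vstar)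
    (tc : ℝ) (htc : tc - tstar ≥ (1 - ε) * dist c vstar) :
    tc ≥ B.inf' ⟨vstar, hvstar⟩ (fun v =>
      Obs.sup' hObs (fun ω =>
        dist c v - dist ω.1 v + ω.2 - ε * (dist c v + dist ω.1 v))) :=
  stmt_16_general ε tstar B vstar hvstar c Obs hObs hub tc htc
end

section
/- (Proposition 5, upper bound.) Let (V, d) be a metric space, ε ∈ [0, 1], t* ∈ ℝ, let B ⊆ V be a finite set containing the source v*, let c ∈ V, and let Ω be a finite nonempty set of observations (u_ω, t_ω) ∈ V × ℝ with t_ω − t* ≥ (1 − ε)·d(u_ω, v*) for every ω ∈ Ω. If the infection time t_c of c satisfies t_c − t* ≤ (1 + ε)·d(c, v*), then t_c ≤ max_{v ∈ B} min_{ω ∈ Ω} { d(c, v) − d(u_ω, v) + t_ω + ε·(d(c, v) + d(u_ω, v)) }. -/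
/-! At `v = v*` every term of the minimum equals `(1 + ε)·d(c, v*) + (t_ω − (1 − ε)·d(u_ω, v*))`,
and the lower bound on `t_ω` makes this at least `t* + (1 + ε)·d(c, v*) ≥ t_c`. -/

theorem le_noisy_gain_term_at_source {V : Type*} [PseudoMetricSpace V] {ε tstar tc t : ℝ}
    {c u vstar : V} (ht : t - tstar ≥ (1 - ε) * dist u vstar)
    (htc : tc - tstar ≤ (1 + ε) * dist c vstar) :
    tc ≤ dist c vstar - dist u vstar + t + ε * (dist c vstar + dist u vstar) := by
  linarith

theorem stmt_17_general {V : Type*} [MetricSpace V] (ε : ℝ)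
    (tstar : ℝ)
    (B : Finset V) (vstar : V) (hvstar : vstar ∈ B) (c : V)
    (Obs : Finset (V × ℝ)) (hObs : Obs.Nonempty)
    (hlb : ∀ ω ∈ Obs, ω.2 - tstar ≥ (1 - ε) * dist ω.1 vstar)
    (tc : ℝ) (htc : tc - tstar ≤ (1 + ε) * dist c vstar) :
    tc ≤ B.sup' ⟨vstar, hvstar⟩ (fun v =>
      Obs.inf' hObs (fun ω =>
        dist c v - dist ω.1 v + ω.2 + ε * (dist c v + dist ω.1 v))) :=
  Finset.le_sup'_of_le _ hvstar <|
    Finset.le_inf' _ _ fun ω hω => le_noisy_gain_term_at_source (hlb ω hω) htc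

theorem stmt_17 {V : Type*} [MetricSpace V] (ε : ℝ)
    (hε : ε ∈ Set.Icc (0 : ℝ) 1) (tstar : ℝ)
    (B : Finset V) (vstar : V) (hvstar : vstar ∈ B) (c : V)
    (Obs : Finset (V × ℝ)) (hObs : Obs.Nonempty)
    (hlb : ∀ ω ∈ Obs, ω.2 - tstar ≥ (1 - ε) * dist ω.1 vstar)
    (tc : ℝ) (htc : tc - tstar ≤ (1 + ε) * dist c vstar) :
    tc ≤ B.sup' ⟨vstar, hvstar⟩ (fun v =>
      Obs.inf' hObs (fun ω =>
        dist c v - dist ω.1 v + ω.2 + ε * (dist c v + dist ω.1 v))) :=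
  stmt_17_general ε tstar B vstar hvstar c Obs hObs hlb tc htc
end
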